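/- With the notation of Fox calculus on F = F(l,r) (Fox derivatives ∂/∂l, ∂/∂r and the ring map φ : ℤF → ℤ[t,t⁻¹] sending both generators to t), let R_k be the iterated bracket R₁ = l, R_{j+1} = [R_j, r⁻¹] with [a,b] = a b⁻¹ a⁻¹ b, and let w_k = R_k · l · R_k⁻¹ · r⁻¹. Then for k ≥ 2: φ(∂w_k/∂l) = 1 + (1 − t)^k. -/
import Mathlib


open LaurentPolynomial

/-- The free group on two generators `l` and `r`. -/
abbrev F2 := FreeGroup (Fin 2)

/-- The generator `l`. -/
def l : F2 := FreeGroup.of 0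

/-- The generator `r`. -/
def r : F2 := FreeGroup.of 1

/-- The ring map `φ : ℤF → ℤ[t,t⁻¹]` sending both generators to `t`, restricted to group
elements: `φ g = t^(total exponent sum of g)`. -/
noncomputable def phi (g : F2) : LaurentPolynomial ℤ :=
  T (Multiplicative.toAdd ((FreeGroup.lift fun _ => Multiplicative.ofAdd (1 : ℤ)) g))

/-- `IsFoxDerivative x d` says that `d : F2 → ℤ[t,t⁻¹]` is the composite `φ ∘ (∂/∂x)` of
the Fox free derivative with respect to the generator `x` with the map `φ`.  It is
characterized by the Leibniz rule `d(uv) = d(u) + φ(u)·d(v)` together with its values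
`d(l)` and `d(r)` on the generators (`∂x/∂x = 1`, `∂y/∂x = 0` for `y ≠ x`). -/
structure IsFoxDerivative (x : F2) (d : F2 → LaurentPolynomial ℤ) : Prop where
  leibniz : ∀ u v : F2, d (u * v) = d u + phi u * d v
  gen_self : d x = 1
  gen_other : ∀ y : Fin 2, FreeGroup.of y ≠ x → d (FreeGroup.of y) = 0

/-- The bracket convention of the paper: `[a,b] = a b⁻¹ a⁻¹ b`. -/
def br {G : Type*} [Group G] (a b : G) : G := a * b⁻¹ * a⁻¹ * b

/-- The iterated bracket `R_k = [[…[[l,r⁻¹],r⁻¹],…],r⁻¹]` (`R₁ = l`). -/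
def R : ℕ → F2
  | 0 => 1
  | 1 => l
  | j + 1 => br (R j) r⁻¹

/-- The Wirtinger relator `w_k = R_k · l · R_k⁻¹ · r⁻¹` of the welded long knot `L_k`. -/
def wrel (k : ℕ) : F2 := R k * l * (R k)⁻¹ * r⁻¹

-- Auxiliary lemmas

lemma phi_mul (u v : F2) : phi (u * v) = phi u * phi v := by
  unfold phi
  rw [map_mul, toAdd_mul, T_add]

lemma phi_one : phi 1 = 1 := by
  unfold phi
  rw [map_one, toAdd_one, T_zero]

lemma phi_inv_mul (u : F2) : phi u⁻¹ * phi u = 1 := by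
  rw [← phi_mul, inv_mul_cancel, phi_one]

lemma phi_l : phi l = T 1 := by
  unfold phi l
  rw [FreeGroup.lift_apply_of, toAdd_ofAdd]

lemma phi_r : phi r = T 1 := by
  unfold phi r
  rw [FreeGroup.lift_apply_of, toAdd_ofAdd]

lemma phi_br (a b : F2) : phi (br a b) = 1 := by
  unfold br
  rw [phi_mul, phi_mul, phi_mul]
  calc phi a * phi b⁻¹ * phi a⁻¹ * phi b
      = (phi a⁻¹ * phi a) * (phi b⁻¹ * phi b) := by ring
    _ = 1 := by rw [phi_inv_mul, phi_inv_mul, one_mul]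

lemma phi_R (j : ℕ) : phi (R (j + 2)) = 1 := by
  show phi (br (R (j + 1)) r⁻¹) = 1
  exact phi_br _ _

lemma phi_R_inv (j : ℕ) : phi ((R (j + 2))⁻¹) = 1 := by
  have h := phi_inv_mul (R (j + 2))
  rwa [phi_R, mul_one] at h

section
variable {dl : F2 → LaurentPolynomial ℤ} (hdl : IsFoxDerivative l dl)
include hdl

lemma d_one : dl 1 = 0 := by
  have h := hdl.leibniz 1 1
  rw [mul_one, phi_one, one_mul] at h
  linear_combination -h

lemma d_inv (u : F2) : dl u⁻¹ = - (phi u⁻¹ * dl u) := by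
  have h := hdl.leibniz u⁻¹ u
  rw [inv_mul_cancel, d_one hdl] at h
  linear_combination -h

lemma d_r : dl r = 0 := hdl.gen_other 1 (by
  simp [l, FreeGroup.of_injective.ne_iff])

lemma d_rinv : dl r⁻¹ = 0 := by rw [d_inv hdl, d_r hdl, mul_zero, neg_zero]

lemma d_R (j : ℕ) : dl (R (j + 1)) = (1 - T 1) ^ j := by
  induction j with
  | zero => simpa [R] using hdl.gen_self
  | succ n ih =>
    have hR : R (n + 2) = R (n + 1) * r * (R (n + 1))⁻¹ * r⁻¹ := by
      show br (R (n + 1)) r⁻¹ = _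
      rw [br, inv_inv]
    rw [hR, hdl.leibniz, hdl.leibniz, hdl.leibniz, d_r hdl, d_rinv hdl,
      d_inv hdl, ih, phi_mul, phi_r]
    have h2 := phi_inv_mul (R (n + 1))
    linear_combination (-(T 1 * (1 - T 1) ^ n)) * h2

lemma main_aux (j : ℕ) : dl (wrel (j + 2)) = 1 + (1 - T 1) ^ (j + 2) := by
  rw [wrel, hdl.leibniz, hdl.leibniz, hdl.leibniz, hdl.gen_self, d_rinv hdl,
    d_inv hdl, d_R hdl, phi_R, phi_mul, phi_l, phi_R, phi_R_inv]
  ring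

end

/-- For `k ≥ 2`, `φ(∂w_k/∂l) = 1 + (1-t)^k`: the (normalized) Alexander polynomial of the
welded long knot `L_k` is `1 + (1-t)^k`. -/
theorem fox_derivative_of_relator (dl : F2 → LaurentPolynomial ℤ)
    (hdl : IsFoxDerivative l dl) (k : ℕ) (hk : 2 ≤ k) :
    dl (wrel k) = 1 + (1 - T 1) ^ k := by
  obtain ⟨j, rfl⟩ : ∃ j, k = j + 2 := ⟨k - 2, by omega⟩
  exact main_aux hdl j
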